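/- Let G ∈ ℝ^{M×N}, Y ∈ ℝ^{M×T}, σ² > 0, T > 0, ρ ≥ 0, and v ∈ ℝ^N with v_n + ρ > 0 for all n. Then the infimum over X ∈ ℝ^{N×T} and γ ∈ ℝ^N with γ_n > 0 of (1/(Tσ²))‖Y − GX‖² + (1/T)∑_{n,t} X[n,t]²/γ_n + ∑_n (v_n + ρ)γ_n equals the infimum over X of (1/(Tσ²))‖Y − GX‖² + 2∑_n √((ρ + v_n)/T)·‖X[n,:]‖₂. -/

import Mathlib

open Real Finset Matrix

/-!
For fixed `X` the minimization over `γ` decouples across rows: with `a = ‖X[n,:]‖² / T` and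
`w = v n + ρ > 0`, AM-GM gives `a / γ + w γ ≥ 2 √(w a)`, with equality at `γ = √(a / w)` when
`a > 0`. For a zero row the bound is only approached as `γ → 0`, so the two infima agree even
though the one over `γ > 0` need not be attained.
-/

theorem Real.sInf_eq_sInf_of_forall_exists_le_add {s t : Set ℝ}
    (hs : ∀ x ∈ s, ∃ y ∈ t, y ≤ x) (ht : ∀ y ∈ t, ∀ ε > 0, ∃ x ∈ s, x ≤ y + ε) :
    sInf s = sInf t := by
  rcases t.eq_empty_or_nonempty with rfl | t_ne
  · have : s = ∅ := Set.eq_empty_of_forall_notMem fun x hx => by simpa using hs x hx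
    rw [this]
  obtain ⟨y₀, hy₀⟩ := t_ne
  have s_ne : s.Nonempty := let ⟨x, hx, _⟩ := ht y₀ hy₀ 1 one_pos; ⟨x, hx⟩
  by_cases Bt : BddBelow t
  · have Bs : BddBelow s := by
      obtain ⟨m, hm⟩ := Bt
      refine ⟨m, fun x hx => ?_⟩
      obtain ⟨y, hy, hyx⟩ := hs x hx
      exact (hm hy).trans hyx
    apply le_antisymm
    · refine le_csInf ⟨y₀, hy₀⟩ fun y hy => le_of_forall_pos_le_add fun ε hε => ?_
      obtain ⟨x, hx, hxy⟩ := ht y hy ε hε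
      exact (csInf_le Bs hx).trans hxy
    · refine le_csInf s_ne fun x hx => ?_
      obtain ⟨y, hy, hyx⟩ := hs x hx
      exact (csInf_le Bt hy).trans hyx
  · have Bs : ¬BddBelow s := by
      rintro ⟨m, hm⟩
      refine Bt ⟨m - 1, fun y hy => ?_⟩
      obtain ⟨x, hx, hxy⟩ := ht y hy 1 one_pos
      linarith [hm hx]
    rw [Real.sInf_of_not_bddBelow Bs, Real.sInf_of_not_bddBelow Bt]

theorem two_mul_sqrt_mul_le_div_add_mul {a w γ : ℝ} (ha : 0 ≤ a) (hw : 0 ≤ w) (hγ : 0 < γ) :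
    2 * √(w * a) ≤ a / γ + w * γ := by
  have hwa : w * a = a / γ * (w * γ) := by field_simp
  calc 2 * √(w * a) = 2 * √(a / γ) * √(w * γ) := by
        rw [hwa, Real.sqrt_mul (by positivity), mul_assoc]
    _ ≤ √(a / γ) ^ 2 + √(w * γ) ^ 2 := two_mul_le_add_sq _ _
    _ = a / γ + w * γ := by rw [sq_sqrt (by positivity), sq_sqrt (by positivity)]

theorem div_add_mul_sqrt_div_eq {b w : ℝ} (hb : 0 < b) (hw : 0 < w) :
    b / √(b / w) + w * √(b / w) = 2 * √(w * b) := by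
  set s := √(b / w)
  have hs : 0 < s := Real.sqrt_pos.mpr (div_pos hb hw)
  have hs2 : s ^ 2 = b / w := sq_sqrt (by positivity)
  have hdiv : b / s = w * s := by
    rw [div_eq_iff hs.ne', mul_assoc, ← sq, hs2]; field_simp
  have hsqrt : √(w * b) = w * s := by
    rw [show w * b = (w * s) ^ 2 by rw [mul_pow, hs2]; field_simp]
    exact sqrt_sq (by positivity)
  rw [hdiv, hsqrt]; ring

theorem exists_div_add_mul_le {a w ε : ℝ} (ha : 0 ≤ a) (hw : 0 < w) (hε : 0 < ε) :
    ∃ γ > 0, a / γ + w * γ ≤ 2 * √(w * a) + ε := by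
  obtain ⟨δ, hδ, hwδ⟩ : ∃ δ > 0, w * δ = (ε / 2) ^ 2 :=
    ⟨ε ^ 2 / (4 * w), by positivity, by field_simp; ring⟩
  have hsqrt : √(w * (a + δ)) ≤ √(w * a) + ε / 2 := by
    rw [Real.sqrt_le_iff]
    refine ⟨by positivity, ?_⟩
    nlinarith [sq_sqrt (mul_nonneg hw.le ha), sqrt_nonneg (w * a)]
  refine ⟨√((a + δ) / w), Real.sqrt_pos.mpr (by positivity), ?_⟩
  calc a / √((a + δ) / w) + w * √((a + δ) / w)
      ≤ (a + δ) / √((a + δ) / w) + w * √((a + δ) / w) := by gcongr; linarith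
    _ = 2 * √(w * (a + δ)) := div_add_mul_sqrt_div_eq (by positivity) hw
    _ ≤ 2 * √(w * a) + ε := by linarith

theorem exists_sum_div_add_mul_le {ι : Type*} [Fintype ι] {a w : ι → ℝ} (ha : ∀ i, 0 ≤ a i)
    (hw : ∀ i, 0 < w i) {ε : ℝ} (hε : 0 < ε) :
    ∃ γ : ι → ℝ, (∀ i, 0 < γ i) ∧
      ∑ i, (a i / γ i + w i * γ i) ≤ ∑ i, 2 * √(w i * a i) + ε := by
  set k : ℝ := Fintype.card ι + 1
  have hk : 0 < k := by positivity
  choose γ hγ hle using fun i => exists_div_add_mul_le (ha i) (hw i) (div_pos hε hk)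
  refine ⟨γ, hγ, ?_⟩
  calc ∑ i, (a i / γ i + w i * γ i)
      ≤ ∑ i, (2 * √(w i * a i) + ε / k) := sum_le_sum fun i _ => hle i
    _ = ∑ i, 2 * √(w i * a i) + (k - 1) * (ε / k) := by
        rw [sum_add_distrib, sum_const, card_univ, nsmul_eq_mul]; ring
    _ ≤ ∑ i, 2 * √(w i * a i) + ε := by
        have : (k - 1) * (ε / k) ≤ ε := by rw [mul_div_assoc', div_le_iff₀ hk]; nlinarith
        linarith

theorem sInf_add_sum_div_add_mul_eq {α ι : Type*} [Fintype ι] (Q : α → ℝ) (a : α → ι → ℝ)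
    (ha : ∀ x i, 0 ≤ a x i) (w : ι → ℝ) (hw : ∀ i, 0 < w i) :
    sInf {c : ℝ | ∃ x, ∃ γ : ι → ℝ, (∀ i, 0 < γ i) ∧
        c = Q x + ∑ i, (a x i / γ i + w i * γ i)}
      = sInf {c : ℝ | ∃ x, c = Q x + ∑ i, 2 * √(w i * a x i)} := by
  apply Real.sInf_eq_sInf_of_forall_exists_le_add
  · rintro _ ⟨x, γ, hγ, rfl⟩
    refine ⟨_, ⟨x, rfl⟩, ?_⟩
    gcongr with i
    exact two_mul_sqrt_mul_le_div_add_mul (ha x i) (hw i).le (hγ i)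
  · rintro _ ⟨x, rfl⟩ ε hε
    obtain ⟨γ, hγ, hle⟩ := exists_sum_div_add_mul_le (ha x) hw hε
    exact ⟨_, ⟨x, γ, hγ, rfl⟩, by linarith⟩

theorem champagne_sparse_coding_equiv_general
    (M N T : ℕ)
    (G : Matrix (Fin M) (Fin N) ℝ) (Y : Matrix (Fin M) (Fin T) ℝ)
    (σ2 : ℝ) (ρ : ℝ)
    (v : Fin N → ℝ) (hv : ∀ n, 0 < v n + ρ) :
    sInf {c : ℝ | ∃ (X : Matrix (Fin N) (Fin T) ℝ) (γ : Fin N → ℝ),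
        (∀ n, 0 < γ n) ∧
        c = (1 / (T * σ2)) * (∑ m, ∑ t, (Y m t - (G * X) m t) ^ 2)
            + (1 / T) * (∑ n, ∑ t, X n t ^ 2 / γ n)
            + ∑ n, (v n + ρ) * γ n}
    = sInf {c : ℝ | ∃ X : Matrix (Fin N) (Fin T) ℝ,
        c = (1 / (T * σ2)) * (∑ m, ∑ t, (Y m t - (G * X) m t) ^ 2)
            + 2 * ∑ n, Real.sqrt ((ρ + v n) / T) * Real.sqrt (∑ t, X n t ^ 2)} := by
  have penalty_eq (X : Matrix (Fin N) (Fin T) ℝ) (γ : Fin N → ℝ) :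
      (1 / T) * (∑ n, ∑ t, X n t ^ 2 / γ n) + ∑ n, (v n + ρ) * γ n
        = ∑ n, ((∑ t, X n t ^ 2) / T / γ n + (v n + ρ) * γ n) := by
    simp only [mul_sum, ← sum_div, sum_add_distrib]
    congr 1; refine sum_congr rfl fun n _ => ?_; ring
  have l21_eq (X : Matrix (Fin N) (Fin T) ℝ) :
      2 * ∑ n, √((ρ + v n) / T) * √(∑ t, X n t ^ 2)
        = ∑ n, 2 * √((v n + ρ) * ((∑ t, X n t ^ 2) / T)) := by
    simp only [mul_sum]
    refine sum_congr rfl fun n _ => ?_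
    rw [← Real.sqrt_mul (div_nonneg (by linarith [hv n]) T.cast_nonneg)]
    ring_nf
  simp only [add_assoc, penalty_eq, l21_eq]
  exact sInf_add_sum_div_add_mul_eq _ _ (fun X n => by positivity) _ hv

theorem champagne_sparse_coding_equiv
    (M N T : ℕ) (hT : 0 < T)
    (G : Matrix (Fin M) (Fin N) ℝ) (Y : Matrix (Fin M) (Fin T) ℝ)
    (σ2 : ℝ) (hσ : 0 < σ2) (ρ : ℝ) (hρ : 0 ≤ ρ)
    (v : Fin N → ℝ) (hv : ∀ n, 0 < v n + ρ) :
    sInf {c : ℝ | ∃ (X : Matrix (Fin N) (Fin T) ℝ) (γ : Fin N → ℝ),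
        (∀ n, 0 < γ n) ∧
        c = (1 / (T * σ2)) * (∑ m, ∑ t, (Y m t - (G * X) m t) ^ 2)
            + (1 / T) * (∑ n, ∑ t, X n t ^ 2 / γ n)
            + ∑ n, (v n + ρ) * γ n}
    = sInf {c : ℝ | ∃ X : Matrix (Fin N) (Fin T) ℝ,
        c = (1 / (T * σ2)) * (∑ m, ∑ t, (Y m t - (G * X) m t) ^ 2)
            + 2 * ∑ n, Real.sqrt ((ρ + v n) / T) * Real.sqrt (∑ t, X n t ^ 2)} :=
  champagne_sparse_coding_equiv_general M N T G Y σ2 ρ v hv
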